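/- For the wheel-type graph G_wheel(n, b_l, b_g) = B(n, b_l) + K_{b_g, n−b_g} (sum of a band graph on the n−b_g peripheral vertices plus b_g universal center vertices), with b_l, b_g ≥ 1, any ordering π has mLogGapA(G_wheel, π) ≥ 1 + c·log₂(n − b_g)/ d̄ for some constant c > 0 independent of n (for n sufficiently large), where d̄ = m/n is the average degree; in particular the optimal mLogGapA on G_wheel is bounded away from 1 by a term of order log₂(n)/d̄. -/

import Mathlib

open Finset
open scoped Classical

/-- Sum of `log₂(1 + gap)` over consecutive gaps of a (sorted) list of indices. -/
noncomputable def gapTotal (l : List ℕ) : ℝ :=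
  ((l.zip l.tail).map (fun p => Real.logb 2 (1 + ((p.2 - p.1 : ℕ) : ℝ)))).sum

/-- The contribution of vertex `v` to `m * mLogGapA`:
`1 + Σ_{i=2}^{d(v)} log₂(1 + π(u_i) - π(u_{i-1}))` with neighbors sorted by `π`. -/
noncomputable def vertexGap {V : Type*} [Fintype V] (G : SimpleGraph V) (π : V → ℕ) (v : V) : ℝ :=
  1 + gapTotal (((G.neighborFinset v).image π).sort (· ≤ ·))

/-- `mLogGapA(G, π)`, the average gap measure. -/
noncomputable def mLogGapA {V : Type*} [Fintype V] (G : SimpleGraph V) (π : V → ℕ) : ℝ :=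
  (∑ v : V, vertexGap G π v) / (2 * (G.edgeFinset.card : ℝ))

/-- `mLogA(G, π)`, the average neighbor distance measure. -/
noncomputable def mLogA {V : Type*} [Fintype V] (G : SimpleGraph V) (π : V → ℕ) : ℝ :=
  (∑ v : V, ∑ u ∈ G.neighborFinset v, Real.logb 2 (1 + |(π u : ℝ) - (π v : ℝ)|)) /
    (2 * (G.edgeFinset.card : ℝ))

/-- wheel-type graph: the first `bg` vertices are universal centers, the remaining
vertices form a band graph with semi-bandwidth `bl` (linear arrangement). -/
def wheelGraph (n bl bg : ℕ) : SimpleGraph (Fin n) :=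
  SimpleGraph.fromRel
    (fun i j => (i : ℕ) < bg ∨ ((i : ℤ) - (j : ℤ)).natAbs ≤ bl)

/-!
Every gap in a sorted adjacency list costs at least `log₂ 2 = 1`, so `vertexGap G π v ≥ deg v`
and the vertex gaps sum to at least `2|E|`; by subadditivity of `log₂ (1 + ·)`, a list containing
two labels at distance `D` costs at least `log₂ (1 + D)`. In the wheel graph every peripheral
vertex is adjacent to the center `0`, and at most `2D + 1` labels lie within distance `D` of
`π 0`. For `D = (n - b_g)/4` this leaves a quarter of all vertices `v` peripheral with a band
neighbour `v + 1` whose label is at distance `≥ D` from `π 0`. Their degree is at most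
`b_g + 2 b_l`, so each of them exceeds its degree by `log₂ (1 + D) - b_g - 2 b_l`, which is at
least `log₂ (n - b_g) / 4` once `n` is large.
-/

lemma logb_one_add_natCast_nonneg (k : ℕ) : 0 ≤ Real.logb 2 (1 + k) :=
  Real.logb_nonneg one_lt_two (le_add_of_nonneg_right k.cast_nonneg)

lemma one_le_logb_one_add_natCast {k : ℕ} (hk : 1 ≤ k) : 1 ≤ Real.logb 2 (1 + k) := by
  have h2 : (2 : ℝ) ≤ 1 + k := by linarith [(Nat.one_le_cast (α := ℝ)).mpr hk]
  simpa using Real.logb_le_logb_of_le one_lt_two two_pos h2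

lemma logb_one_add_add_le {s t : ℝ} (hs : 0 ≤ s) (ht : 0 ≤ t) :
    Real.logb 2 (1 + (s + t)) ≤ Real.logb 2 (1 + s) + Real.logb 2 (1 + t) := by
  rw [← Real.logb_mul (by positivity) (by positivity)]
  exact Real.logb_le_logb_of_le one_lt_two (by positivity) (by nlinarith)

lemma gapTotal_cons_cons (a b : ℕ) (l : List ℕ) :
    gapTotal (a :: b :: l) = Real.logb 2 (1 + ((b - a : ℕ) : ℝ)) + gapTotal (b :: l) := by
  simp [gapTotal]

lemma gapTotal_nonneg (l : List ℕ) : 0 ≤ gapTotal l :=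
  List.sum_nonneg <| by
    simp only [List.mem_map]
    rintro _ ⟨p, -, rfl⟩
    exact logb_one_add_natCast_nonneg _

lemma gapTotal_le_gapTotal_cons (a : ℕ) (l : List ℕ) : gapTotal l ≤ gapTotal (a :: l) := by
  cases l with
  | nil => rfl
  | cons b l =>
    rw [gapTotal_cons_cons]
    linarith [logb_one_add_natCast_nonneg (b - a)]

lemma length_sub_one_le_gapTotal {l : List ℕ} (hl : l.Pairwise (· < ·)) :
    (l.length : ℝ) - 1 ≤ gapTotal l := by
  induction l with
  | nil => simp [gapTotal]
  | cons a l ih =>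
    cases l with
    | nil => simp [gapTotal]
    | cons b l =>
      obtain ⟨hab, hl⟩ := List.pairwise_cons.mp hl
      have hgap := one_le_logb_one_add_natCast (by have := hab b (by simp); omega : 1 ≤ b - a)
      rw [gapTotal_cons_cons]
      simp only [List.length_cons, Nat.cast_add, Nat.cast_one] at ih ⊢
      linarith [ih hl]

lemma logb_one_add_sub_head_le_gapTotal {a y : ℕ} {l : List ℕ}
    (hl : (a :: l).Pairwise (· < ·)) (hy : y ∈ a :: l) :
    Real.logb 2 (1 + ((y - a : ℕ) : ℝ)) ≤ gapTotal (a :: l) := by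
  induction l generalizing a with
  | nil => simp_all [gapTotal]
  | cons b l ih =>
    obtain ⟨hab, hl⟩ := List.pairwise_cons.mp hl
    rw [gapTotal_cons_cons]
    rcases List.mem_cons.mp hy with rfl | hy
    · simpa using add_nonneg (logb_one_add_natCast_nonneg _) (gapTotal_nonneg _)
    · have hby : b ≤ y := by
        rcases List.mem_cons.mp hy with rfl | hy
        · rfl
        · exact ((List.pairwise_cons.mp hl).1 y hy).le
      have hsplit : ((y - a : ℕ) : ℝ) = ((b - a : ℕ) : ℝ) + ((y - b : ℕ) : ℝ) := by
        have := hab b (by simp); norm_cast; omega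
      rw [hsplit]
      linarith [logb_one_add_add_le (b - a : ℕ).cast_nonneg (y - b : ℕ).cast_nonneg, ih hl hy]

lemma logb_one_add_sub_le_gapTotal {x y : ℕ} {l : List ℕ} (hl : l.Pairwise (· < ·))
    (hx : x ∈ l) (hy : y ∈ l) (hxy : x ≤ y) :
    Real.logb 2 (1 + ((y - x : ℕ) : ℝ)) ≤ gapTotal l := by
  induction l with
  | nil => simp at hx
  | cons a l ih =>
    rcases List.mem_cons.mp hx with rfl | hxl
    · exact logb_one_add_sub_head_le_gapTotal hl hy
    · obtain ⟨hab, hl'⟩ := List.pairwise_cons.mp hl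
      have hyl : y ∈ l := by
        rcases List.mem_cons.mp hy with rfl | hyl
        · exact absurd (hab x hxl) (by omega)
        · exact hyl
      exact (ih hl' hxl hyl).trans (gapTotal_le_gapTotal_cons a l)

lemma card_sub_one_le_gapTotal_sort (s : Finset ℕ) :
    (#s : ℝ) - 1 ≤ gapTotal (s.sort (· ≤ ·)) := by
  simpa using length_sub_one_le_gapTotal s.sortedLT_sort.pairwise

lemma logb_one_add_dist_le_gapTotal_sort {s : Finset ℕ} {x y : ℕ}
    (hx : x ∈ s) (hy : y ∈ s) :
    Real.logb 2 (1 + (Nat.dist x y : ℝ)) ≤ gapTotal (s.sort (· ≤ ·)) := by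
  wlog hxy : x ≤ y generalizing x y
  · rw [Nat.dist_comm]
    exact this hy hx (by omega)
  rw [Nat.dist_eq_sub_of_le hxy]
  exact logb_one_add_sub_le_gapTotal s.sortedLT_sort.pairwise
    ((mem_sort _).mpr hx) ((mem_sort _).mpr hy) hxy

section vertexGap

variable {V : Type*} [Fintype V] (G : SimpleGraph V) {π : V → ℕ}

lemma degree_le_vertexGap (hπ : Function.Injective π) (v : V) :
    (G.degree v : ℝ) ≤ vertexGap G π v := by
  have := card_sub_one_le_gapTotal_sort ((G.neighborFinset v).image π)
  rw [card_image_of_injective _ hπ, SimpleGraph.card_neighborFinset_eq_degree] at this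
  unfold vertexGap
  linarith

lemma logb_one_add_dist_le_vertexGap {v a b : V} (ha : G.Adj v a) (hb : G.Adj v b) :
    1 + Real.logb 2 (1 + (Nat.dist (π a) (π b) : ℝ)) ≤ vertexGap G π v := by
  unfold vertexGap
  gcongr
  exact logb_one_add_dist_le_gapTotal_sort
    (mem_image_of_mem π ((G.mem_neighborFinset v a).mpr ha))
    (mem_image_of_mem π ((G.mem_neighborFinset v b).mpr hb))

lemma one_add_div_le_mLogGapA (hπ : Function.Injective π) (hE : 0 < #G.edgeFinset)
    (S : Finset V) (δ : ℝ) (hS : ∀ v ∈ S, G.degree v + δ ≤ vertexGap G π v) :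
    1 + #S * δ / (2 * #G.edgeFinset) ≤ mLogGapA G π := by
  have hsum : 2 * (#G.edgeFinset : ℝ) + #S * δ ≤ ∑ v, vertexGap G π v := by
    have hdeg : ∑ v, (G.degree v : ℝ) = 2 * #G.edgeFinset := by
      exact_mod_cast G.sum_degrees_eq_twice_card_edges
    have hexcess : ∑ v ∈ S, δ ≤ ∑ v, (vertexGap G π v - G.degree v) :=
      (sum_le_sum fun v hv => by linarith [hS v hv]).trans <|
        sum_le_sum_of_subset_of_nonneg (subset_univ S)
          fun v _ _ => by linarith [degree_le_vertexGap G hπ v]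
    rw [sum_sub_distrib, hdeg, sum_const, nsmul_eq_mul] at hexcess
    linarith
  have hE' : (0 : ℝ) < 2 * #G.edgeFinset := by positivity
  rw [mLogGapA, le_div_iff₀ hE', add_mul, one_mul, div_mul_cancel₀ _ hE'.ne']
  linarith

end vertexGap

lemma logb_le_four_mul_logb_one_add_div_four_sub {P K : ℕ} (hK : 1 ≤ K) (hP : 4 * 4 ^ K ≤ P) :
    Real.logb 2 P ≤ 4 * (Real.logb 2 (1 + (P / 4 : ℕ)) - K) := by
  set D := P / 4
  have hKD : 4 ^ K ≤ D := by omega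
  have hD : 4 ≤ D := (Nat.le_self_pow (by omega) 4).trans hKD
  have hlogb_sq (x : ℝ) : Real.logb 2 (x ^ 2) = 2 * Real.logb 2 x := by
    simpa using Real.logb_pow 2 x 2
  have hK_le : 2 * (K : ℝ) ≤ Real.logb 2 (1 + D) := by
    have h4K : ((4 ^ K : ℕ) : ℝ) = (2 ^ K) ^ 2 := by
      rw [← pow_mul, mul_comm, pow_mul]; norm_num
    have hKD' : ((4 ^ K : ℕ) : ℝ) ≤ D := by exact_mod_cast hKD
    have := Real.logb_le_logb_of_le one_lt_two (by positivity)
      (show ((4 ^ K : ℕ) : ℝ) ≤ 1 + D by linarith)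
    rwa [h4K, hlogb_sq, Real.logb_pow, Real.logb_self_eq_one one_lt_two, mul_one] at this
  have hP_le : Real.logb 2 P ≤ 2 * Real.logb 2 (1 + D) := by
    rw [← hlogb_sq]
    refine Real.logb_le_logb_of_le one_lt_two (by norm_cast; omega) ?_
    have : P ≤ (1 + D) ^ 2 := by nlinarith [show P < 4 * D + 4 by omega]
    exact_mod_cast this
  linarith

lemma card_filter_dist_lt_le {α : Type*} [Fintype α] {f : α → ℕ} (hf : Function.Injective f)
    (c D : ℕ) : #{x | Nat.dist c (f x) < D} ≤ 2 * D + 1 := by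
  refine (card_le_card_of_injOn f (t := Icc (c - D) (c + D)) ?_ hf.injOn).trans ?_
  · intro x hx
    rw [mem_coe, mem_filter, Nat.dist] at hx
    rw [mem_coe, mem_Icc]
    omega
  · rw [Nat.card_Icc]
    omega

section wheelGraph

variable {n bl bg : ℕ}

lemma wheelGraph_adj {i j : Fin n} : (wheelGraph n bl bg).Adj i j ↔
    i ≠ j ∧ ((i : ℕ) < bg ∨ (j : ℕ) < bg ∨ ((i : ℤ) - j).natAbs ≤ bl) := by
  simp only [wheelGraph, SimpleGraph.fromRel_adj]
  constructor <;> rintro ⟨hij, h⟩ <;> exact ⟨hij, by omega⟩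

lemma wheelGraph_degree_le {v : Fin n} (hv : bg ≤ v) :
    (wheelGraph n bl bg).degree v ≤ bg + 2 * bl := by
  rw [← SimpleGraph.card_neighborFinset_eq_degree]
  have hmaps : Set.MapsTo Fin.val ((wheelGraph n bl bg).neighborFinset v : Set (Fin n))
      (range bg ∪ (Icc (v - bl : ℕ) (v + bl)).erase v : Finset ℕ) := by
    intro u hu
    rw [mem_coe, SimpleGraph.mem_neighborFinset, wheelGraph_adj] at hu
    have := Fin.val_ne_of_ne hu.1
    simp only [coe_union, coe_range, coe_erase, coe_Icc, Set.mem_union, Set.mem_Iio,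
      Set.mem_sdiff, Set.mem_Icc, Set.mem_singleton_iff]
    omega
  refine (card_le_card_of_injOn Fin.val hmaps Fin.val_injective.injOn).trans <|
    (card_union_le _ _).trans ?_
  rw [card_range, card_erase_of_mem (by simp), Nat.card_Icc]
  omega

lemma le_card_filter_exists_adj_far (hbl : 1 ≤ bl) {p : Fin n → ℕ} (hp : Function.Injective p)
    (c D : ℕ) :
    n ≤ #{v : Fin n | bg ≤ v ∧ ∃ u, (wheelGraph n bl bg).Adj v u ∧ D ≤ Nat.dist c (p u)}
      + (bg + 1) + (2 * D + 1) := by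
  set far : Finset (Fin n) := {u | bg < u ∧ D ≤ Nat.dist c (p u)}
  have hcover : n ≤ #far + (bg + 1) + (2 * D + 1) := by
    calc n = #(univ : Finset (Fin n)) := (card_fin n).symm
      _ ≤ #(far ∪ ({u | (u : ℕ) < bg + 1} : Finset (Fin n)) ∪
          ({u | Nat.dist c (p u) < D} : Finset (Fin n))) :=
        card_le_card fun u _ => by
          simp only [far, mem_union, mem_filter, mem_univ, true_and]
          omega
      _ ≤ _ := by
        grw [card_union_le, card_union_le, Fin.card_filter_val_lt, card_filter_dist_lt_le hp,
          min_le_right]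
  have hpred : #far ≤ #{v : Fin n | bg ≤ v ∧ ∃ u, (wheelGraph n bl bg).Adj v u ∧
      D ≤ Nat.dist c (p u)} := by
    refine card_le_card_of_injOn (fun u => ⟨u - 1, (Nat.sub_le _ _).trans_lt u.isLt⟩) ?_ ?_
    · intro u hu
      rw [mem_coe, mem_filter] at hu ⊢
      refine ⟨mem_univ _, Nat.le_sub_one_of_lt hu.2.1, u,
        wheelGraph_adj.mpr ⟨?_, ?_⟩, hu.2.2⟩
      all_goals simp only [ne_eq, Fin.ext_iff]; omega
    · intro u hu w hw huw
      rw [mem_coe, mem_filter] at hu hw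
      simp only [Fin.mk.injEq] at huw
      exact Fin.ext (by omega)
  omega

lemma degree_add_le_vertexGap_wheelGraph {p : Fin n → ℕ} {c v u : Fin n} {D : ℕ}
    (hc : (c : ℕ) < bg) (hv : bg ≤ v) (hvu : (wheelGraph n bl bg).Adj v u)
    (hfar : D ≤ Nat.dist (p c) (p u)) :
    (wheelGraph n bl bg).degree v + (Real.logb 2 (1 + D) - ((bg + 2 * bl : ℕ) : ℝ)) ≤
      vertexGap (wheelGraph n bl bg) p v := by
  have hvc : (wheelGraph n bl bg).Adj v c :=
    wheelGraph_adj.mpr ⟨fun h => by rw [h] at hv; omega, Or.inr (Or.inl hc)⟩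
  have hdeg : ((wheelGraph n bl bg).degree v : ℝ) ≤ (bg + 2 * bl : ℕ) :=
    Nat.cast_le.mpr (wheelGraph_degree_le hv)
  have hD : Real.logb 2 (1 + D) ≤ Real.logb 2 (1 + Nat.dist (p c) (p u)) :=
    Real.logb_le_logb_of_le one_lt_two (by positivity) (by gcongr)
  linarith [logb_one_add_dist_le_vertexGap (π := p) _ hvc hvu]

lemma wheelGraph_card_edgeFinset_pos (hbg : 1 ≤ bg) (hn : 2 ≤ n) :
    0 < #(wheelGraph n bl bg).edgeFinset :=
  card_pos.mpr ⟨s(⟨0, by omega⟩, ⟨1, hn⟩), SimpleGraph.mem_edgeFinset.mpr <|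
    wheelGraph_adj.mpr ⟨by simp [Fin.ext_iff], Or.inl hbg⟩⟩

lemma exists_le_four_mul_card_degree_add_logb_le_vertexGap (hbl : 1 ≤ bl) (hbg : 1 ≤ bg)
    (hn : 2 * bg + 4 * 4 ^ (bg + 2 * bl) + 16 ≤ n) {p : Fin n → ℕ}
    (hp : Function.Injective p) :
    ∃ S : Finset (Fin n), n ≤ 4 * #S ∧ ∀ v ∈ S, (wheelGraph n bl bg).degree v +
      Real.logb 2 ((n : ℝ) - bg) / 4 ≤ vertexGap (wheelGraph n bl bg) p v := by
  set c : Fin n := ⟨0, by omega⟩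
  set D := (n - bg) / 4
  refine ⟨({v | bg ≤ v ∧ ∃ u, (wheelGraph n bl bg).Adj v u ∧ D ≤ Nat.dist (p c) (p u)} :
    Finset (Fin n)), ?_, ?_⟩
  · have := le_card_filter_exists_adj_far (bg := bg) hbl hp (p c) D
    omega
  · intro v hv
    obtain ⟨hv, u, hvu, hfar⟩ := (mem_filter.mp hv).2
    have hlog := logb_le_four_mul_logb_one_add_div_four_sub (by omega : 1 ≤ bg + 2 * bl)
      (by omega : 4 * 4 ^ (bg + 2 * bl) ≤ n - bg)
    rw [Nat.cast_sub (by omega)] at hlog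
    linarith [degree_add_le_vertexGap_wheelGraph (c := c) hbg hv hvu hfar]

end wheelGraph

theorem stmt14 (bl bg : ℕ) (hbl : 1 ≤ bl) (hbg : 1 ≤ bg) :
    ∃ c : ℝ, 0 < c ∧ ∃ N : ℕ, ∀ n : ℕ, N ≤ n → ∀ π : Fin n ≃ Fin n,
      1 + c * Real.logb 2 ((n : ℝ) - (bg : ℝ)) /
          ((2 * ((wheelGraph n bl bg).edgeFinset.card : ℝ)) / (n : ℝ)) ≤
        mLogGapA (wheelGraph n bl bg) (fun i => (π i : ℕ)) := by
  refine ⟨1 / 16, by norm_num, 2 * bg + 4 * 4 ^ (bg + 2 * bl) + 16, fun n hn π => ?_⟩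
  have hp : Function.Injective fun i => (π i : ℕ) := Fin.val_injective.comp π.injective
  obtain ⟨S, hS, hexcess⟩ := exists_le_four_mul_card_degree_add_logb_le_vertexGap hbl hbg hn hp
  have hE := wheelGraph_card_edgeFinset_pos (bl := bl) hbg (by omega : 2 ≤ n)
  have hlog : 0 ≤ Real.logb 2 ((n : ℝ) - bg) := by
    rw [← Nat.cast_sub (by omega)]
    exact Real.logb_nonneg one_lt_two (by norm_cast; omega)
  have hS' : (n : ℝ) ≤ 4 * #S := by exact_mod_cast hS
  set E := #(wheelGraph n bl bg).edgeFinset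
  calc _ = 1 + n * (Real.logb 2 ((n : ℝ) - bg) / 16) / (2 * E) := by
        rw [div_div_eq_mul_div]; ring
    _ ≤ 1 + #S * (Real.logb 2 ((n : ℝ) - bg) / 4) / (2 * E) := by
        gcongr 1 + ?_ / _
        nlinarith
    _ ≤ _ := one_add_div_le_mLogGapA _ hp hE S _ hexcess
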